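/- arXiv:1612.01628 — 4 statements merged into one kernel-verified Lean document; each statement's English description precedes it below -/
import Mathlib

section
/- Let Ω ⊂ ℝ^d be open with both Ω and Ω^c of positive Lebesgue measure, 0 < s < 1 and p ≥ 1. The space W^{s,p}(Ω|Ω^c) of functions f ∈ L^p(ℝ^d) with finite norm ‖f‖^p = ‖f‖_{L^p(ℝ^d)}^p + ∫_Ω ∫_{Ω^c} |f(x)−f(y)|^p / |x−y|^{d+sp} dy dx is a Banach space. -/
/-!
A Cauchy sequence for this norm is Cauchy in `L^p`, so it converges in `L^p` and a subsequence
`f (ψ k)` converges almost everywhere to some `g`. Both parts of the norm are integrals of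
nonnegative functions depending continuously on the values of `f`, so Fatou's lemma along this
subsequence bounds `‖f n - g‖^p` by `liminf_k ‖f n - f (ψ k)‖^p`, which is small for large `n`.
The pointwise bound `|a - b|^p ≤ 2^(p-1) (|a|^p + |b|^p)` then shows that `g = f N - (f N - g)`
has finite norm.
-/

open MeasureTheory
open scoped ENNReal

/-- The `p`-th power of the norm of the space `W^{s,p}(Ω|Ω^c)`:
`‖f‖_{L^p(ℝ^d)}^p + ∫_Ω ∫_{Ω^c} |f(x)-f(y)|^p / |x-y|^{d+sp} dy dx`. -/
noncomputable def Wnorm {d : ℕ} (Ω : Set (EuclideanSpace ℝ (Fin d))) (s p : ℝ)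
    (f : EuclideanSpace ℝ (Fin d) → ℝ) : ℝ≥0∞ :=
  (∫⁻ x, ENNReal.ofReal (|f x| ^ p)) +
    ∫⁻ x in Ω, ∫⁻ y in Ωᶜ,
      ENNReal.ofReal (|f x - f y| ^ p / dist x y ^ ((d : ℝ) + s * p))

open Filter Topology

theorem ENNReal.le_liminf_add {ι : Type*} {f : Filter ι} (u v : ι → ℝ≥0∞) :
    liminf u f + liminf v f ≤ liminf (u + v) f := by
  rw [liminf_eq, liminf_eq, sSup_eq_iSup, sSup_eq_iSup]
  refine ENNReal.biSup_add_biSup_le ⟨0, by simp⟩ ⟨0, by simp⟩ fun a ha b hb =>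
    le_liminf_of_le (by isBoundedDefault) ?_
  filter_upwards [ha, hb] with n ha hb using add_le_add ha hb

section LIntegral

variable {α : Type*} [MeasurableSpace α] {μ : Measure α}

theorem lintegral_le_liminf_of_ae_le_liminf {F : ℕ → α → ℝ≥0∞} {G : α → ℝ≥0∞}
    (hF : ∀ k, Measurable (F k)) (hG : ∀ᵐ x ∂μ, G x ≤ liminf (fun k => F k x) atTop) :
    ∫⁻ x, G x ∂μ ≤ liminf (fun k => ∫⁻ x, F k x ∂μ) atTop :=
  (lintegral_mono_ae hG).trans (lintegral_liminf_le hF)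

theorem lintegral_le_mul_add_of_le {F G H : α → ℝ≥0∞} {c : ℝ≥0∞} (hc : c ≠ ∞)
    (hG : Measurable G) (h : ∀ x, F x ≤ c * (G x + H x)) :
    ∫⁻ x, F x ∂μ ≤ c * (∫⁻ x, G x ∂μ + ∫⁻ x, H x ∂μ) := by
  rw [← lintegral_add_left hG, ← lintegral_const_mul' _ _ hc]
  exact lintegral_mono h

end LIntegral

theorem abs_sub_rpow_le {p : ℝ} (hp : 1 ≤ p) (a b : ℝ) :
    |a - b| ^ p ≤ 2 ^ (p - 1) * (|a| ^ p + |b| ^ p) := by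
  have h := NNReal.rpow_add_le_mul_rpow_add_rpow (Real.nnabs a) (Real.nnabs b) hp
  have h' : ((Real.nnabs a + Real.nnabs b : NNReal) : ℝ) ^ p ≤
      (2 ^ (p - 1) * (Real.nnabs a ^ p + Real.nnabs b ^ p) : NNReal) := by
    exact_mod_cast h
  push_cast at h'
  exact (Real.rpow_le_rpow (abs_nonneg _) (abs_sub _ _) (by linarith)).trans h'

theorem ofReal_abs_sub_rpow_div_le {p : ℝ} (hp : 1 ≤ p) (a b : ℝ) {D : ℝ} (hD : 0 ≤ D) :
    ENNReal.ofReal (|a - b| ^ p / D) ≤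
      2 ^ (p - 1) * (ENNReal.ofReal (|a| ^ p / D) + ENNReal.ofReal (|b| ^ p / D)) := by
  have h2 : (2 : ℝ≥0∞) ^ (p - 1) = ENNReal.ofReal (2 ^ (p - 1)) := by
    rw [← ENNReal.ofReal_rpow_of_pos two_pos, ENNReal.ofReal_ofNat]
  rw [h2, ← ENNReal.ofReal_add (by positivity) (by positivity),
    ← ENNReal.ofReal_mul (by positivity), ← add_div, ← mul_div_assoc]
  exact ENNReal.ofReal_le_ofReal (div_le_div_of_nonneg_right (abs_sub_rpow_le hp a b) hD)

theorem MemLp.exists_subseq_ae_tendsto_of_cauchy {α E : Type*} [MeasurableSpace α]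
    {μ : Measure α} [NormedAddCommGroup E] [CompleteSpace E] {p : ℝ≥0∞} [Fact (1 ≤ p)]
    {f : ℕ → α → E} (hf : ∀ n, MemLp (f n) p μ)
    (hcauchy : ∀ ε > 0, ∃ N, ∀ m ≥ N, ∀ n ≥ N, eLpNorm (f m - f n) p μ < ε) :
    ∃ g : α → E, StronglyMeasurable g ∧ ∃ ψ : ℕ → ℕ, StrictMono ψ ∧
      ∀ᵐ x ∂μ, Tendsto (fun k => f (ψ k) x) atTop (𝓝 (g x)) := by
  have hF : CauchySeq fun n => (hf n).toLp (f n) :=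
    EMetric.cauchySeq_iff.2 fun ε hε => (hcauchy ε hε).imp fun N hN m hm n hn => by
      rw [Lp.edist_toLp_toLp]; exact hN m hm n hn
  obtain ⟨G, hG⟩ := cauchySeq_tendsto_of_complete hF
  obtain ⟨ψ, hψ, hψG⟩ := (tendstoInMeasure_of_tendsto_Lp hG).exists_seq_tendsto_ae
  have hGm := Lp.aestronglyMeasurable G
  refine ⟨hGm.mk G, hGm.stronglyMeasurable_mk, ψ, hψ, ?_⟩
  filter_upwards [hψG, hGm.ae_eq_mk, ae_all_iff.2 fun n => (hf n).coeFn_toLp] with x hx hGx hfx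
  simpa only [hfx, hGx] using hx

theorem measurable_setLIntegral_abs_sub_rpow_div_dist_rpow {X : Type*} [PseudoMetricSpace X]
    [MeasurableSpace X] [OpensMeasurableSpace X] [SecondCountableTopology X] {μ : Measure X}
    [SFinite μ] {h : X → ℝ} (hh : Measurable h) (S : Set X) (p q : ℝ) :
    Measurable fun x => ∫⁻ y in S, ENNReal.ofReal (|h x - h y| ^ p / dist x y ^ q) ∂μ :=
  Measurable.lintegral_prod_right' (f := fun z : X × X =>
    ENNReal.ofReal (|h z.1 - h z.2| ^ p / dist z.1 z.2 ^ q)) (by fun_prop)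

section Wnorm

variable {d : ℕ} {Ω : Set (EuclideanSpace ℝ (Fin d))} {s p : ℝ}

theorem eLpNorm_rpow_le_Wnorm (hp : 0 < p) (f : EuclideanSpace ℝ (Fin d) → ℝ) :
    eLpNorm f (ENNReal.ofReal p) volume ^ p ≤ Wnorm Ω s p f := by
  refine le_of_eq_of_le ?_ le_self_add
  rw [eLpNorm_eq_lintegral_rpow_enorm_toReal (by simpa) ENNReal.ofReal_ne_top,
    ENNReal.toReal_ofReal hp.le, ← ENNReal.rpow_mul, one_div, inv_mul_cancel₀ hp.ne',
    ENNReal.rpow_one]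
  refine lintegral_congr fun x => ?_
  rw [← ofReal_norm, Real.norm_eq_abs, ENNReal.ofReal_rpow_of_nonneg (abs_nonneg _) hp.le]

theorem Wnorm_sub_le (hp : 1 ≤ p) {a b : EuclideanSpace ℝ (Fin d) → ℝ} (ha : Measurable a) :
    Wnorm Ω s p (a - b) ≤ 2 ^ (p - 1) * (Wnorm Ω s p a + Wnorm Ω s p b) := by
  set q := (d : ℝ) + s * p
  have hc : (2 : ℝ≥0∞) ^ (p - 1) ≠ ∞ := ENNReal.rpow_ne_top_of_nonneg (by linarith) (by simp)
  have hLp : ∫⁻ x, ENNReal.ofReal (|a x - b x| ^ p) ≤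
      2 ^ (p - 1) * ((∫⁻ x, ENNReal.ofReal (|a x| ^ p)) + ∫⁻ x, ENNReal.ofReal (|b x| ^ p)) :=
    lintegral_le_mul_add_of_le hc (by fun_prop) fun x => by
      simpa using ofReal_abs_sub_rpow_div_le hp (a x) (b x) zero_le_one
  have hGagliardo : ∫⁻ x in Ω, ∫⁻ y in Ωᶜ,
        ENNReal.ofReal (|(a x - b x) - (a y - b y)| ^ p / dist x y ^ q) ≤
      2 ^ (p - 1) * ((∫⁻ x in Ω, ∫⁻ y in Ωᶜ, ENNReal.ofReal (|a x - a y| ^ p / dist x y ^ q)) +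
        ∫⁻ x in Ω, ∫⁻ y in Ωᶜ, ENNReal.ofReal (|b x - b y| ^ p / dist x y ^ q)) :=
    lintegral_le_mul_add_of_le hc (measurable_setLIntegral_abs_sub_rpow_div_dist_rpow ha _ _ _)
      fun x => lintegral_le_mul_add_of_le hc (by fun_prop) fun y => by
        simpa only [sub_sub_sub_comm] using
          ofReal_abs_sub_rpow_div_le hp (a x - a y) (b x - b y) (by positivity)
  calc Wnorm Ω s p (a - b) ≤ _ := add_le_add hLp hGagliardo
    _ = 2 ^ (p - 1) * (Wnorm Ω s p a + Wnorm Ω s p b) := by simp only [Wnorm]; ring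

theorem Wnorm_le_liminf (hp : 0 ≤ p) {u : ℕ → EuclideanSpace ℝ (Fin d) → ℝ}
    {v : EuclideanSpace ℝ (Fin d) → ℝ} (hu : ∀ k, Measurable (u k))
    (hv : ∀ᵐ x, Tendsto (fun k => u k x) atTop (𝓝 (v x))) :
    Wnorm Ω s p v ≤ liminf (fun k => Wnorm Ω s p (u k)) atTop := by
  set q := (d : ℝ) + s * p
  have hcont (D : ℝ) : Continuous fun t : ℝ => ENNReal.ofReal (|t| ^ p / D) :=
    ENNReal.continuous_ofReal.comp (by fun_prop (disch := exact hp))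
  have hLp : ∫⁻ x, ENNReal.ofReal (|v x| ^ p) ≤
      liminf (fun k => ∫⁻ x, ENNReal.ofReal (|u k x| ^ p)) atTop :=
    lintegral_le_liminf_of_ae_le_liminf (fun k => by fun_prop) <| hv.mono fun x hx => by
      simpa [Function.comp_def] using (((hcont 1).tendsto _).comp hx).liminf_eq.ge
  have hGagliardo : ∫⁻ x in Ω, ∫⁻ y in Ωᶜ, ENNReal.ofReal (|v x - v y| ^ p / dist x y ^ q) ≤
      liminf (fun k => ∫⁻ x in Ω, ∫⁻ y in Ωᶜ,
        ENNReal.ofReal (|u k x - u k y| ^ p / dist x y ^ q)) atTop :=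
    lintegral_le_liminf_of_ae_le_liminf
      (fun k => measurable_setLIntegral_abs_sub_rpow_div_dist_rpow (hu k) _ _ _) <|
        (ae_restrict_of_ae hv).mono fun x hx =>
          lintegral_le_liminf_of_ae_le_liminf (fun k => by fun_prop) <|
            (ae_restrict_of_ae hv).mono fun y hy =>
              (((hcont _).tendsto _).comp (hx.sub hy)).liminf_eq.ge
  exact (add_le_add hLp hGagliardo).trans (ENNReal.le_liminf_add _ _)

theorem Wnorm_le_of_tendsto_of_eventually_le (hp : 0 ≤ p) {u : ℕ → EuclideanSpace ℝ (Fin d) → ℝ}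
    {v : EuclideanSpace ℝ (Fin d) → ℝ} (hu : ∀ k, Measurable (u k))
    (hv : ∀ᵐ x, Tendsto (fun k => u k x) atTop (𝓝 (v x))) {C : ℝ≥0∞}
    (hC : ∀ᶠ k in atTop, Wnorm Ω s p (u k) ≤ C) :
    Wnorm Ω s p v ≤ C :=
  (Wnorm_le_liminf hp hu hv).trans (liminf_le_of_frequently_le' hC.frequently)

theorem Wnorm_sub_lt_top (hp : 1 ≤ p) {a b : EuclideanSpace ℝ (Fin d) → ℝ} (ha : Measurable a)
    (ha' : Wnorm Ω s p a < ∞) (hb : Wnorm Ω s p b < ∞) : Wnorm Ω s p (a - b) < ∞ :=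
  (Wnorm_sub_le hp ha).trans_lt <| ENNReal.mul_lt_top
    (ENNReal.rpow_lt_top_of_nonneg (by linarith) (by simp)) (ENNReal.add_lt_top.2 ⟨ha', hb⟩)

end Wnorm

theorem stmt2_general {d : ℕ} (Ω : Set (EuclideanSpace ℝ (Fin d)))
    (s p : ℝ) (hp : 1 ≤ p)
    (f : ℕ → EuclideanSpace ℝ (Fin d) → ℝ) (hmeas : ∀ n, Measurable (f n))
    (hfin : ∀ n, Wnorm Ω s p (f n) < ⊤)
    (hCauchy : ∀ ε : ℝ, 0 < ε → ∃ N, ∀ m ≥ N, ∀ n ≥ N,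
      Wnorm Ω s p (f m - f n) < ENNReal.ofReal ε) :
    ∃ g : EuclideanSpace ℝ (Fin d) → ℝ, Measurable g ∧ Wnorm Ω s p g < ⊤ ∧
      Filter.Tendsto (fun n => Wnorm Ω s p (f n - g)) Filter.atTop (nhds 0) := by
  have hp0 : 0 < p := one_pos.trans_le hp
  have hCauchy' : ∀ ε > 0, ∃ N, ∀ m ≥ N, ∀ n ≥ N, Wnorm Ω s p (f m - f n) < ε := fun ε hε => by
    obtain ⟨r, -, hr, hrε⟩ := ENNReal.lt_iff_exists_real_btwn.1 hε
    exact (hCauchy r (ENNReal.ofReal_pos.1 hr)).imp fun N hN m hm n hn => (hN m hm n hn).trans hrε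
  have : Fact (1 ≤ ENNReal.ofReal p) := ⟨ENNReal.one_le_ofReal.2 hp⟩
  have hLp (n : ℕ) : MemLp (f n) (ENNReal.ofReal p) volume :=
    ⟨(hmeas n).aestronglyMeasurable, (ENNReal.rpow_lt_top_iff_of_pos hp0).1
      ((eLpNorm_rpow_le_Wnorm hp0 _).trans_lt (hfin n))⟩
  have hLpCauchy : ∀ ε > 0, ∃ N, ∀ m ≥ N, ∀ n ≥ N,
      eLpNorm (f m - f n) (ENNReal.ofReal p) volume < ε := fun ε hε =>
    (hCauchy' (ε ^ p) (ENNReal.rpow_pos_of_nonneg hε hp0.le)).imp fun N hN m hm n hn =>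
      (ENNReal.rpow_lt_rpow_iff hp0).1 ((eLpNorm_rpow_le_Wnorm hp0 _).trans_lt (hN m hm n hn))
  obtain ⟨g, hg, ψ, hψ, hfg⟩ := MemLp.exists_subseq_ae_tendsto_of_cauchy hLp hLpCauchy
  have hlim : ∀ ε > 0, ∃ N, ∀ n ≥ N, Wnorm Ω s p (f n - g) ≤ ε := fun ε hε => by
    obtain ⟨N, hN⟩ := hCauchy' ε hε
    refine ⟨N, fun n hn => Wnorm_le_of_tendsto_of_eventually_le hp0.le
      (fun k => (hmeas n).sub (hmeas (ψ k))) (hfg.mono fun x hx => hx.const_sub (f n x)) ?_⟩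
    filter_upwards [hψ.tendsto_atTop.eventually_ge_atTop N] with k hk
    exact (hN n hn (ψ k) hk).le
  obtain ⟨N, hN⟩ := hlim 1 one_pos
  refine ⟨g, hg.measurable, ?_, ENNReal.tendsto_atTop_zero.2 hlim⟩
  simpa using Wnorm_sub_lt_top hp (hmeas N) (hfin N) ((hN N le_rfl).trans_lt ENNReal.one_lt_top)

/-- Completeness of `W^{s,p}(Ω|Ω^c)`: every Cauchy sequence converges in the space. -/
theorem stmt2 {d : ℕ} (Ω : Set (EuclideanSpace ℝ (Fin d))) (hΩ : IsOpen Ω)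
    (h1 : 0 < volume Ω) (h2 : 0 < volume Ωᶜ)
    (s p : ℝ) (hs : 0 < s) (hs1 : s < 1) (hp : 1 ≤ p)
    (f : ℕ → EuclideanSpace ℝ (Fin d) → ℝ) (hmeas : ∀ n, Measurable (f n))
    (hfin : ∀ n, Wnorm Ω s p (f n) < ⊤)
    (hCauchy : ∀ ε : ℝ, 0 < ε → ∃ N, ∀ m ≥ N, ∀ n ≥ N,
      Wnorm Ω s p (f m - f n) < ENNReal.ofReal ε) :
    ∃ g : EuclideanSpace ℝ (Fin d) → ℝ, Measurable g ∧ Wnorm Ω s p g < ⊤ ∧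
      Filter.Tendsto (fun n => Wnorm Ω s p (f n - g)) Filter.atTop (nhds 0) :=
  stmt2_general Ω s p hp f hmeas hfin hCauchy
end

section
/- If a measurable function f : ℝ^d → ℝ satisfies ∫_Ω ∫_{Ω^c} |f(x)−f(y)|^p |x−y|^{−d−sp} dy dx < ∞, then f ∈ L^p(ℝ^d, (1+|x|)^{−d−sp} dx). -/
/-!
Inside `Ωᶜ` pick a set `T` of positive finite measure on which `|f|` and `‖·‖` are bounded by
some `R`. For `y ∈ T`, the triangle inequality gives
`|f x|^p ≲ |f x - f y|^p + R^p` and `|x - y| ≤ R (1 + |x|)`, so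
`|f x|^p (1 + |x|)^(-d-sp) ≲ |f x - f y|^p / |x - y|^(d+sp) + (1 + |x|)^(-d-sp)`.
Averaging over `y ∈ T` bounds the weighted integral of `|f|^p` over `Ω` by the double
integral over `Ω × Ωᶜ` plus the integral of `(1 + |x|)^(-d-sp)`, finite since `sp > 0`.
The kernel is symmetric, so the roles of `Ω` and `Ωᶜ` can be exchanged.
-/

open MeasureTheory Metric Function
open scoped ENNReal

section Pointwise

variable {E : Type*} [SeminormedAddCommGroup E]

lemma dist_le_mul_one_add_norm {x y : E} {R : ℝ} (hR : 1 ≤ R) (hy : ‖y‖ ≤ R) :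
    dist x y ≤ R * (1 + ‖x‖) := by
  have hxy : dist x y ≤ ‖x‖ + ‖y‖ := by rw [dist_eq_norm]; exact norm_sub_le x y
  nlinarith [norm_nonneg x]

lemma one_add_norm_rpow_neg_le_div {x y : E} {q R : ℝ} (hq : 0 ≤ q) (hR : 1 ≤ R)
    (hy : ‖y‖ ≤ R) (hxy : 0 < dist x y) :
    (1 + ‖x‖) ^ (-q) ≤ R ^ q / dist x y ^ q := by
  have hx : 0 < 1 + ‖x‖ := by positivity
  rw [Real.rpow_neg hx.le, ← one_div, div_le_div_iff₀ (by positivity) (by positivity), one_mul,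
    ← Real.mul_rpow (by linarith) hx.le]
  exact Real.rpow_le_rpow hxy.le (dist_le_mul_one_add_norm hR hy) hq

lemma abs_rpow_le_two_rpow_mul {p : ℝ} (hp : 1 ≤ p) (u v : ℝ) :
    |u| ^ p ≤ 2 ^ (p - 1) * (|u - v| ^ p + |v| ^ p) := by
  have hconv :=
    NNReal.rpow_add_le_mul_rpow_add_rpow ⟨|u - v|, abs_nonneg _⟩ ⟨|v|, abs_nonneg _⟩ hp
  calc |u| ^ p ≤ (|u - v| + |v|) ^ p := by
        gcongr
        simpa using abs_add_le (u - v) v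
    _ ≤ 2 ^ (p - 1) * (|u - v| ^ p + |v| ^ p) := by exact_mod_cast hconv

end Pointwise

lemma abs_rpow_mul_weight_le {E : Type*} [NormedAddCommGroup E] (f : E → ℝ) {p q R : ℝ}
    (hp : 1 ≤ p) (hq : 0 ≤ q) (hR : 1 ≤ R) {x y : E} (hy : ‖y‖ ≤ R) (hfy : |f y| ≤ R) :
    |f x| ^ p * (1 + ‖x‖) ^ (-q) ≤
      2 ^ (p - 1) * R ^ q * (|f x - f y| ^ p / dist x y ^ q)
        + 2 ^ (p - 1) * R ^ p * (1 + ‖x‖) ^ (-q) := by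
  have hdiff : |f x - f y| ^ p * (1 + ‖x‖) ^ (-q) ≤ R ^ q * (|f x - f y| ^ p / dist x y ^ q) := by
    rcases (dist_nonneg (x := x) (y := y)).eq_or_lt with hxy | hxy
    · rw [eq_comm, dist_eq_zero] at hxy
      simp [hxy, Real.zero_rpow (by linarith : p ≠ 0)]
    · rw [mul_div_left_comm]
      gcongr
      exact one_add_norm_rpow_neg_le_div hq hR hy hxy
  calc |f x| ^ p * (1 + ‖x‖) ^ (-q)
      ≤ 2 ^ (p - 1) * (|f x - f y| ^ p + |f y| ^ p) * (1 + ‖x‖) ^ (-q) := by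
        gcongr; exact abs_rpow_le_two_rpow_mul hp _ _
    _ ≤ 2 ^ (p - 1) * (|f x - f y| ^ p * (1 + ‖x‖) ^ (-q)) +
          2 ^ (p - 1) * R ^ p * (1 + ‖x‖) ^ (-q) := by
        rw [mul_add, add_mul, mul_assoc]; gcongr
    _ ≤ _ := by
        have := mul_le_mul_of_nonneg_left hdiff (by positivity : (0 : ℝ) ≤ 2 ^ (p - 1))
        linarith

section Averaging

variable {α β : Type*} [MeasurableSpace α] [MeasurableSpace β] {μ : Measure α} {ν : Measure β}

lemma lintegral_lt_top_of_forall_le_add {G H : α → ℝ≥0∞} {F : α → β → ℝ≥0∞}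
    [SFinite ν] {T : Set β} (hF : Measurable (uncurry F)) (hT0 : ν T ≠ 0) (hT : ν T ≠ ⊤)
    (hbound : ∀ x, ∀ y ∈ T, G x ≤ F x y + H x)
    (hFint : ∫⁻ x, ∫⁻ y in T, F x y ∂ν ∂μ < ⊤) (hH : ∫⁻ x, H x ∂μ < ⊤) :
    ∫⁻ x, G x ∂μ < ⊤ := by
  have hpoint : ∀ x, ν T * G x ≤ (∫⁻ y in T, F x y ∂ν) + ν T * H x := fun x => by
    calc ν T * G x = ∫⁻ _ in T, G x ∂ν := by rw [setLIntegral_const, mul_comm]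
      _ ≤ ∫⁻ y in T, (F x y + H x) ∂ν :=
        setLIntegral_mono (hF.of_uncurry_left.add_const _) (hbound x)
      _ = (∫⁻ y in T, F x y ∂ν) + ν T * H x := by
        rw [lintegral_add_right _ measurable_const, setLIntegral_const, mul_comm]
  have hmul : ν T * ∫⁻ x, G x ∂μ < ⊤ := by
    calc ν T * ∫⁻ x, G x ∂μ = ∫⁻ x, ν T * G x ∂μ := (lintegral_const_mul' _ _ hT).symm
      _ ≤ ∫⁻ x, ((∫⁻ y in T, F x y ∂ν) + ν T * H x) ∂μ := lintegral_mono hpoint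
      _ = (∫⁻ x, ∫⁻ y in T, F x y ∂ν ∂μ) + ν T * ∫⁻ x, H x ∂μ := by
        rw [lintegral_add_left (hF.lintegral_prod_right (ν := ν.restrict T)),
          lintegral_const_mul' _ _ hT]
      _ < ⊤ := ENNReal.add_lt_top.2 ⟨hFint, ENNReal.mul_lt_top hT.lt_top hH⟩
  exact ENNReal.lt_top_of_mul_ne_top_right hmul.ne hT0

lemma setLIntegral_setLIntegral_comm_of_symm [SFinite μ] {k : α → α → ℝ≥0∞}
    (hk : Measurable (uncurry k)) (hsymm : ∀ x y, k x y = k y x) (A B : Set α) :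
    ∫⁻ x in A, ∫⁻ y in B, k x y ∂μ ∂μ = ∫⁻ x in B, ∫⁻ y in A, k x y ∂μ ∂μ := by
  rw [lintegral_lintegral_swap hk.aemeasurable]
  simp_rw [hsymm]

end Averaging

lemma exists_measure_inter_bounded_ne_zero {E : Type*} [Norm E] [MeasurableSpace E]
    {μ : Measure E} (f : E → ℝ) {U : Set E} (hU : μ U ≠ 0) :
    ∃ R : ℝ, 1 ≤ R ∧ μ (U ∩ {y | ‖y‖ ≤ R ∧ |f y| ≤ R}) ≠ 0 := by
  have hcover : (⋃ n : ℕ, U ∩ {y | ‖y‖ ≤ n + 1 ∧ |f y| ≤ n + 1}) = U := by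
    refine Set.iUnion_subset (fun _ => Set.inter_subset_left) |>.antisymm fun y hy => ?_
    obtain ⟨n, hn⟩ := exists_nat_ge (max ‖y‖ |f y|)
    have hny := max_le_iff.1 hn
    exact Set.mem_iUnion.2 ⟨n, hy, by constructor <;> linarith⟩
  obtain ⟨n, hn⟩ := exists_measure_pos_of_not_measure_iUnion_null (hcover ▸ hU)
  exact ⟨n + 1, by linarith [n.cast_nonneg (α := ℝ)], hn.ne'⟩

lemma measurable_uncurry_ofReal_abs_sub_rpow_div_dist_rpow {E : Type*} [PseudoMetricSpace E]
    [SecondCountableTopology E] [MeasurableSpace E] [OpensMeasurableSpace E] {f : E → ℝ}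
    (hf : Measurable f) (p q : ℝ) :
    Measurable (uncurry fun x y : E => ENNReal.ofReal (|f x - f y| ^ p / dist x y ^ q)) := by
  fun_prop

section HaarMeasure

variable {E : Type*} [NormedAddCommGroup E] [NormedSpace ℝ E] [FiniteDimensional ℝ E]
  [MeasurableSpace E] [BorelSpace E] {μ : Measure E} [μ.IsAddHaarMeasure]

lemma setLIntegral_abs_rpow_mul_weight_lt_top {f : E → ℝ} (hf : Measurable f) {p q : ℝ}
    (hp : 1 ≤ p) (hq : Module.finrank ℝ E < q) {S U : Set E} (hU0 : μ U ≠ 0)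
    (hkernel : ∫⁻ x in S, ∫⁻ y in U,
        ENNReal.ofReal (|f x - f y| ^ p / dist x y ^ q) ∂μ ∂μ < ⊤) :
    ∫⁻ x in S, ENNReal.ofReal (|f x| ^ p * (1 + ‖x‖) ^ (-q)) ∂μ < ⊤ := by
  have hq0 : 0 ≤ q := (Nat.cast_nonneg _).trans hq.le
  obtain ⟨R, hR, hT0⟩ := exists_measure_inter_bounded_ne_zero (μ := μ) f hU0
  set T := U ∩ {y | ‖y‖ ≤ R ∧ |f y| ≤ R}
  have hTU : T ⊆ U := Set.inter_subset_left
  have hTball : T ⊆ closedBall 0 R := fun y hy => mem_closedBall_zero_iff.2 hy.2.1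
  have hTfin : μ T ≠ ⊤ := ((measure_mono hTball).trans_lt measure_closedBall_lt_top).ne
  set C₁ := ENNReal.ofReal (2 ^ (p - 1) * R ^ q)
  set C₂ := ENNReal.ofReal (2 ^ (p - 1) * R ^ p)
  refine lintegral_lt_top_of_forall_le_add (ν := μ) (T := T)
    (F := fun x y => C₁ * ENNReal.ofReal (|f x - f y| ^ p / dist x y ^ q))
    (H := fun x => C₂ * ENNReal.ofReal ((1 + ‖x‖) ^ (-q)))
    ((measurable_uncurry_ofReal_abs_sub_rpow_div_dist_rpow hf p q).const_mul _) hT0 hTfin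
    (fun x y hy => ?_) ?_ ?_
  · rw [← ENNReal.ofReal_mul (by positivity), ← ENNReal.ofReal_mul (by positivity),
      ← ENNReal.ofReal_add (by positivity) (by positivity)]
    exact ENNReal.ofReal_le_ofReal (abs_rpow_mul_weight_le f hp hq0 hR hy.2.1 hy.2.2)
  · simp_rw [lintegral_const_mul' C₁ _ ENNReal.ofReal_ne_top]
    exact ENNReal.mul_lt_top ENNReal.ofReal_lt_top
      ((lintegral_mono fun x => lintegral_mono_set hTU).trans_lt hkernel)
  · rw [lintegral_const_mul' _ _ ENNReal.ofReal_ne_top]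
    exact ENNReal.mul_lt_top ENNReal.ofReal_lt_top
      ((setLIntegral_le_lintegral _ _).trans_lt (finite_integral_one_add_norm hq))

end HaarMeasure

theorem stmt5_general {d : ℕ} (Ω : Set (EuclideanSpace ℝ (Fin d)))
    (h1 : 0 < volume Ω) (h2 : 0 < volume Ωᶜ)
    (s p : ℝ) (hs : 0 < s) (hp : 1 ≤ p)
    (f : EuclideanSpace ℝ (Fin d) → ℝ) (hf : Measurable f)
    (hsemi : (∫⁻ x in Ω, ∫⁻ y in Ωᶜ,
        ENNReal.ofReal (|f x - f y| ^ p / dist x y ^ ((d : ℝ) + s * p))) < ⊤) :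
    (∫⁻ x, ENNReal.ofReal (|f x| ^ p * (1 + ‖x‖) ^ (-((d : ℝ) + s * p)))) < ⊤ := by
  have hq : (Module.finrank ℝ (EuclideanSpace ℝ (Fin d)) : ℝ) < d + s * p := by
    rw [finrank_euclideanSpace_fin]
    linarith [mul_pos hs (by linarith : (0 : ℝ) < p)]
  have hsemi_swap : ∫⁻ x in Ωᶜ, ∫⁻ y in Ω,
      ENNReal.ofReal (|f x - f y| ^ p / dist x y ^ ((d : ℝ) + s * p)) < ⊤ := by
    rwa [setLIntegral_setLIntegral_comm_of_symm
      (measurable_uncurry_ofReal_abs_sub_rpow_div_dist_rpow hf _ _)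
      (fun x y => by rw [abs_sub_comm, dist_comm])]
  rw [← setLIntegral_univ, ← Set.union_compl_self Ω]
  refine (lintegral_union_le _ _ _).trans_lt <| ENNReal.add_lt_top.2
    ⟨setLIntegral_abs_rpow_mul_weight_lt_top hf hp hq h2.ne' hsemi,
      setLIntegral_abs_rpow_mul_weight_lt_top hf hp hq h1.ne' hsemi_swap⟩

theorem stmt5 {d : ℕ} (Ω : Set (EuclideanSpace ℝ (Fin d))) (hΩ : IsOpen Ω)
    (h1 : 0 < volume Ω) (h2 : 0 < volume Ωᶜ)
    (s p : ℝ) (hs : 0 < s) (hs1 : s < 1) (hp : 1 ≤ p)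
    (f : EuclideanSpace ℝ (Fin d) → ℝ) (hf : Measurable f)
    (hsemi : (∫⁻ x in Ω, ∫⁻ y in Ωᶜ,
        ENNReal.ofReal (|f x - f y| ^ p / dist x y ^ ((d : ℝ) + s * p))) < ⊤) :
    (∫⁻ x, ENNReal.ofReal (|f x| ^ p * (1 + ‖x‖) ^ (-((d : ℝ) + s * p)))) < ⊤ :=
  stmt5_general Ω h1 h2 s p hs hp f hf hsemi
end

section
/- If D ⊂ ℝ^d is κ-plump (for each 0 < r < diam(D) and x ∈ closure(D) there is z ∈ closed ball B̄(x,r) with B(z,κr) ⊂ D), then its boundary ∂D is porous: there exists α > 0 such that for every x ∈ ℝ^d and 0 < r ≤ 1 there exists y ∈ B(x,r) with B(y, αr) ⊂ B(x,r) ∖ ∂D. -/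
/-!
Take a ball `B(x, r)`. If `B(x, r/2)` misses `∂D`, the concentric ball of radius `κr/8` is a hole.
Otherwise pick `p ∈ ∂D` with `|p - x| < r/2`. When `r/4 < diam D`, plumpness at scale `r/4` gives
a ball of radius `κr/4` inside `D` (hence inside `int D`) centred within `r/4` of `p`. When
`diam D ≤ r/4`, all of `closure D` lies within `r/4` of `p`, so a ball of radius `κr/8` centred
at distance `3r/8` from `p` misses `closure D`.
-/

open Metric Set

section PseudoMetric

variable {X : Type*} [PseudoMetricSpace X]

def IsPlump (κ : ℝ) (D : Set X) : Prop :=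
  ∀ r : ℝ, 0 < r → ENNReal.ofReal r < ediam D →
    ∀ x ∈ closure D, ∃ z ∈ closedBall x r, ball z (κ * r) ⊆ D

lemma disjoint_frontier_of_isOpen_subset {U D : Set X} (hU : IsOpen U) (hUD : U ⊆ D) :
    Disjoint U (frontier D) :=
  disjoint_interior_frontier.mono_left (hU.subset_interior_iff.2 hUD)

lemma disjoint_ball_closure_of_ediam_le {D : Set X} {p y : X} {δ ρ : ℝ} (hδ : 0 ≤ δ)
    (hp : p ∈ closure D) (hD : ediam D ≤ ENNReal.ofReal δ) (hy : δ + ρ ≤ dist y p) :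
    Disjoint (ball y ρ) (closure D) := by
  refine Set.disjoint_left.2 fun w hwy hwD => ?_
  have hwp : dist w p ≤ δ := by
    rw [← edist_le_ofReal hδ]
    exact edist_le_of_ediam_le hwD hp ((ediam_closure D).trans_le hD)
  have := dist_triangle_left y p w
  rw [mem_ball] at hwy
  linarith

end PseudoMetric

lemma nontrivial_of_mem_frontier {X : Type*} [TopologicalSpace X] {D : Set X} {p : X}
    (hp : p ∈ frontier D) : Nontrivial X := by
  by_contra h
  have : Subsingleton X := not_nontrivial_iff_subsingleton.1 h
  rcases D.eq_empty_or_nonempty with rfl | hD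
  · simp at hp
  · simp [hD.eq_univ] at hp

variable {E : Type*} [NormedAddCommGroup E] [NormedSpace ℝ E]

theorem IsPlump.exists_ball_subset_ball_diff_frontier {κ : ℝ} {D : Set E} (hD : IsPlump κ D)
    (hκ0 : 0 < κ) (hκ1 : κ ≤ 1) (x : E) {r : ℝ} (hr : 0 < r) :
    ∃ y ∈ ball x r, ball y (κ / 8 * r) ⊆ ball x r \ frontier D := by
  have hρ : 0 < κ / 8 * r := by positivity
  suffices ∃ y, ball y (κ / 8 * r) ⊆ ball x r ∧ Disjoint (ball y (κ / 8 * r)) (frontier D) by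
    obtain ⟨y, hyx, hyD⟩ := this
    exact ⟨y, hyx (mem_ball_self hρ), subset_sdiff.2 ⟨hyx, hyD⟩⟩
  by_cases hnear : Disjoint (ball x (r / 2)) (frontier D)
  · refine ⟨x, ball_subset_ball (by nlinarith), hnear.mono_left (ball_subset_ball ?_)⟩
    nlinarith
  obtain ⟨p, hpx, hpD⟩ := Set.not_disjoint_iff.1 hnear
  rw [mem_ball] at hpx
  by_cases hdiam : ENNReal.ofReal (r / 4) < ediam D
  · obtain ⟨z, hzp, hzD⟩ := hD (r / 4) (by positivity) hdiam p (frontier_subset_closure hpD)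
    rw [mem_closedBall] at hzp
    have hsub : ball z (κ / 8 * r) ⊆ ball z (κ * (r / 4)) := ball_subset_ball (by nlinarith)
    refine ⟨z, ball_subset_ball' ?_, disjoint_frontier_of_isOpen_subset isOpen_ball (hsub.trans hzD)⟩
    nlinarith [dist_triangle z p x]
  · have : Nontrivial E := nontrivial_of_mem_frontier hpD
    obtain ⟨y, hyp⟩ := (NormedSpace.sphere_nonempty (x := p) (r := 3 * r / 8)).2 (by positivity)
    rw [mem_sphere] at hyp
    have hfar := disjoint_ball_closure_of_ediam_le (y := y) (ρ := κ / 8 * r) (by positivity)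
      (frontier_subset_closure hpD) (not_lt.1 hdiam) (by nlinarith)
    refine ⟨y, ball_subset_ball' ?_, hfar.mono_right frontier_subset_closure⟩
    nlinarith [dist_triangle y p x]

theorem stmt10 {d : ℕ} (D : Set (EuclideanSpace ℝ (Fin d))) (κ : ℝ) (hκ : κ ∈ Set.Ioo (0:ℝ) 1)
    (hplump : ∀ r : ℝ, 0 < r → ENNReal.ofReal r < EMetric.diam D →
      ∀ x ∈ closure D, ∃ z ∈ Metric.closedBall x r, Metric.ball z (κ * r) ⊆ D) :
    ∃ α : ℝ, 0 < α ∧ ∀ (x : EuclideanSpace ℝ (Fin d)) (r : ℝ), 0 < r → r ≤ 1 →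
      ∃ y ∈ Metric.ball x r, Metric.ball y (α * r) ⊆ Metric.ball x r \ frontier D :=
  ⟨κ / 8, by linarith [hκ.1], fun x _ hr _ =>
    IsPlump.exists_ball_subset_ball_diff_frontier hplump hκ.1 hκ.2.le x hr⟩
end

section
/- Let f : ℝ^d → ℝ be defined by f(x) = √(|x|−1) for 1 < |x| < 2 and f(x) = 0 otherwise, and let Ω = B_1 ⊂ ℝ^d. Then the seminorm |f|_{W^{s,2}(Ω|Ω^c)}^2 = ∫_{B_1} ∫_{ℝ^d∖B_1} |f(x)−f(y)|^2 |x−y|^{−d−2s} dy dx tends to infinity as s → 1⁻. -/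
open MeasureTheory

/-- The function `f(x) = √(|x|-1)` for `1 < |x| < 2` and `0` otherwise. -/
noncomputable def sqrtFn (d : ℕ) (x : EuclideanSpace ℝ (Fin d)) : ℝ :=
  if 1 < ‖x‖ ∧ ‖x‖ < 2 then Real.sqrt (‖x‖ - 1) else 0

/-!
Fix `x ∈ B₁` at distance `δ = 1 - ‖x‖ ≤ 1/4` from the sphere. Since `f = 0` on `B₁`, the
inner integral is at least its part over the ball of radius `δ` centred `3δ` radially outside
`x`: there `|f(y)|² = ‖y‖ - 1 > δ` and `|x - y| < 4δ`, so the inner integral is `≳ δ^(1-2s)`.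
On the dyadic shell `2^-(n+3) ≤ δ < 2^-(n+2)`, of volume `≍ 2^-n`, this gives a contribution
`≳ q^n` with `q = 2^-(2-2s)`, and summing the geometric series bounds the seminorm below by a
multiple of `(1 - q)⁻¹`, which blows up as `s → 1`.
-/

open Metric Set Filter Topology Function

section NormedSpace

variable {E : Type*} [NormedAddCommGroup E] [NormedSpace ℝ E]

lemma norm_and_dist_of_mem_ball_outward {x : E} (hx : x ≠ 0) {δ : ℝ} (hδ : 0 < δ) {y : E}
    (hy : y ∈ ball (((‖x‖ + 3 * δ) / ‖x‖) • x) δ) :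
    ‖x‖ + 2 * δ < ‖y‖ ∧ ‖y‖ < ‖x‖ + 4 * δ ∧ dist x y < 4 * δ := by
  set c := ((‖x‖ + 3 * δ) / ‖x‖) • x with hc_def
  have hx₀ : 0 < ‖x‖ := norm_pos_iff.mpr hx
  have hc : ‖c‖ = ‖x‖ + 3 * δ := by
    rw [norm_smul, Real.norm_of_nonneg (by positivity), div_mul_cancel₀ _ hx₀.ne']
  have hcx : dist c x = 3 * δ := by
    have : c - x = (3 * δ / ‖x‖) • x := by
      rw [hc_def, add_div, div_self hx₀.ne', add_smul, one_smul, add_sub_cancel_left]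
    rw [dist_eq_norm, this, norm_smul, Real.norm_of_nonneg (by positivity),
      div_mul_cancel₀ _ hx₀.ne']
  have hyc : dist y c < δ := hy
  have hnorm := (abs_norm_sub_norm_le y c).trans_lt (by rwa [← dist_eq_norm])
  rw [abs_lt] at hnorm
  refine ⟨by linarith, by linarith, ?_⟩
  linarith [dist_triangle x c y, dist_comm x c, dist_comm c y]

variable [MeasurableSpace E] [BorelSpace E] [FiniteDimensional ℝ E] (μ : Measure E)
  [μ.IsAddHaarMeasure]

lemma addHaar_norm_preimage_Ioc {a b : ℝ} (ha : 0 ≤ a) (hab : a ≤ b) :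
    μ ((‖·‖) ⁻¹' Ioc a b) =
      ENNReal.ofReal (b ^ Module.finrank ℝ E - a ^ Module.finrank ℝ E) * μ (ball 0 1) := by
  have hset : (‖·‖) ⁻¹' Ioc a b = closedBall (0 : E) b \ closedBall 0 a := by
    ext x; simp [and_comm]
  rw [hset, measure_sdiff (closedBall_subset_closedBall hab)
      measurableSet_closedBall.nullMeasurableSet measure_closedBall_lt_top.ne,
    μ.addHaar_closedBall _ (ha.trans hab), μ.addHaar_closedBall _ ha,
    ← ENNReal.sub_mul (fun _ _ => measure_ball_lt_top.ne), ENNReal.ofReal_sub _ (by positivity)]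

end NormedSpace

lemma sub_mul_pow_le_pow_sub_pow {a b : ℝ} (ha₀ : 0 ≤ a) (ha₁ : a ≤ 1) (hab : a ≤ b)
    {n : ℕ} (hn : n ≠ 0) : (b - a) * a ^ n ≤ b ^ n - a ^ n := by
  obtain ⟨k, rfl⟩ := Nat.exists_eq_succ_of_ne_zero hn
  have h₁ : a ^ (k + 1) ≤ a ^ k := pow_le_pow_of_le_one ha₀ ha₁ (Nat.le_succ k)
  have h₂ : a ^ k ≤ b ^ k := pow_le_pow_left₀ ha₀ hab k
  rw [Nat.succ_eq_add_one, pow_succ' b, pow_succ' a] at *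
  nlinarith

lemma mul_inv_one_sub_le_setLIntegral {α : Type*} [MeasurableSpace α] {μ : Measure α}
    {S : ℕ → Set α} {B : Set α} (hS : ∀ n, MeasurableSet (S n))
    (hdisj : Pairwise (Disjoint on S)) (hSB : ∀ n, S n ⊆ B) {f : α → ENNReal} {c r : ENNReal}
    (h : ∀ n, c * r ^ n ≤ ∫⁻ x in S n, f x ∂μ) :
    c * (1 - r)⁻¹ ≤ ∫⁻ x in B, f x ∂μ :=
  calc c * (1 - r)⁻¹ = ∑' n, c * r ^ n := by rw [ENNReal.tsum_mul_left, ENNReal.tsum_geometric]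
    _ ≤ ∑' n, ∫⁻ x in S n, f x ∂μ := ENNReal.tsum_le_tsum h
    _ = ∫⁻ x in ⋃ n, S n, f x ∂μ := (lintegral_iUnion hS hdisj f).symm
    _ ≤ ∫⁻ x in B, f x ∂μ := lintegral_mono_set (iUnion_subset hSB)

lemma quarter_pow_mul_rpow_le {d : ℕ} {s δ : ℝ} (hs : s ≤ 1) (hδ : 0 < δ) :
    (1 / 4) ^ (d + 2) * δ ^ (1 - 2 * s) ≤ δ * (4 * δ) ^ (-((d : ℝ) + 2 * s)) * δ ^ d := by
  have hsplit : δ * (4 * δ) ^ (-((d : ℝ) + 2 * s)) * δ ^ d =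
      4 ^ (-((d : ℝ) + 2 * s)) * δ ^ (1 - 2 * s) := by
    rw [Real.mul_rpow (by norm_num) hδ.le, ← Real.rpow_natCast, show 1 - 2 * s =
      1 + -((d : ℝ) + 2 * s) + d by ring, Real.rpow_add hδ, Real.rpow_add hδ, Real.rpow_one]
    ring
  have hfour : ((1 : ℝ) / 4) ^ (d + 2) ≤ 4 ^ (-((d : ℝ) + 2 * s)) := by
    rw [one_div, inv_pow, ← Real.rpow_natCast, ← Real.rpow_neg (by norm_num)]
    exact Real.rpow_le_rpow_of_exponent_le (by norm_num) (by push_cast; linarith)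
  rw [hsplit]
  gcongr

lemma geometric_term_le {d n : ℕ} {s : ℝ} (hs : 1 / 2 ≤ s) :
    ((1 : ℝ) / 4) ^ (d + 3) * (1 / 2) ^ (d + 1) * ((1 / 2) ^ (2 - 2 * s)) ^ n ≤
      (1 / 4) ^ (d + 2) * ((1 / 2) ^ (n + 2)) ^ (1 - 2 * s) *
        ((1 / 2) ^ (n + 3) * (1 / 2) ^ d) := by
  set q : ℝ := (1 / 2) ^ (2 - 2 * s)
  have hq : 1 / 2 ≤ q := by
    calc (1 / 2 : ℝ) = (1 / 2) ^ (1 : ℝ) := (Real.rpow_one _).symm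
      _ ≤ q := Real.rpow_le_rpow_of_exponent_ge (by norm_num) (by norm_num) (by linarith)
  set ε : ℝ := (1 / 2) ^ (n + 2)
  have hε : 0 < ε := by positivity
  have key : ε ^ (1 - 2 * s) * (1 / 2) ^ (n + 3) = q ^ (n + 2) / 2 := by
    rw [Real.rpow_pow_comm (by norm_num), show (1 / 2 : ℝ) ^ (n + 3) = ε / 2 by ring,
      mul_div_assoc', ← Real.rpow_add_one hε.ne']
    congr 2; ring
  have hq2 : (1 / 4 : ℝ) ≤ q ^ 2 := by nlinarith
  calc (1 / 4) ^ (d + 3) * (1 / 2) ^ (d + 1) * q ^ n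
      = (1 / 4) ^ (d + 2) * (1 / 2) ^ d / 2 * (q ^ n * (1 / 4)) := by ring
    _ ≤ (1 / 4) ^ (d + 2) * (1 / 2) ^ d / 2 * (q ^ n * q ^ 2) := by gcongr
    _ = _ := by
      rw [← pow_add]
      linear_combination (-((1 / 4 : ℝ) ^ (d + 2) * (1 / 2) ^ d)) * key

section SqrtFn

variable {d : ℕ}

lemma sqrtFn_of_norm_le_one {x : EuclideanSpace ℝ (Fin d)} (hx : ‖x‖ ≤ 1) : sqrtFn d x = 0 :=
  if_neg fun h => h.1.not_ge hx

lemma sq_sqrtFn {y : EuclideanSpace ℝ (Fin d)} (h₁ : 1 < ‖y‖) (h₂ : ‖y‖ < 2) :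
    sqrtFn d y ^ 2 = ‖y‖ - 1 := by
  rw [sqrtFn, if_pos ⟨h₁, h₂⟩, Real.sq_sqrt (by linarith)]

variable (d) in
noncomputable def gagliardoKernel (s : ℝ) (x y : EuclideanSpace ℝ (Fin d)) : ENNReal :=
  ENNReal.ofReal (|sqrtFn d x - sqrtFn d y| ^ 2 * dist x y ^ (-((d : ℝ) + 2 * s)))

lemma ofReal_mul_volume_le_lintegral_gagliardoKernel {s : ℝ} (hs₀ : 0 ≤ s) (hs : s ≤ 1)
    {x : EuclideanSpace ℝ (Fin d)} (hx₀ : 0 < 1 - ‖x‖) (hx : 1 - ‖x‖ ≤ 1 / 4) :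
    ENNReal.ofReal ((1 / 4) ^ (d + 2) * (1 - ‖x‖) ^ (1 - 2 * s)) *
        volume (ball (0 : EuclideanSpace ℝ (Fin d)) 1) ≤
      ∫⁻ y in (ball 0 1)ᶜ, gagliardoKernel d s x y := by
  set δ := 1 - ‖x‖ with hδ
  have hx0 : x ≠ 0 := by rintro rfl; norm_num at hδ hx; linarith
  have : Nontrivial (EuclideanSpace ℝ (Fin d)) := nontrivial_of_ne x 0 hx0
  set c := ((‖x‖ + 3 * δ) / ‖x‖) • x
  have hbound : ∀ y ∈ ball c δ, 1 < ‖y‖ ∧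
      ENNReal.ofReal (δ * (4 * δ) ^ (-((d : ℝ) + 2 * s))) ≤ gagliardoKernel d s x y := by
    intro y hy
    obtain ⟨hy₁, hy₂, hxy⟩ := norm_and_dist_of_mem_ball_outward hx0 hx₀ hy
    refine ⟨by linarith, ENNReal.ofReal_le_ofReal ?_⟩
    rw [sqrtFn_of_norm_le_one (by linarith), zero_sub, abs_neg, sq_abs,
      sq_sqrtFn (by linarith) (by linarith)]
    have hxy₀ : 0 < dist x y := dist_pos.mpr (by rintro rfl; linarith)
    exact mul_le_mul (by linarith)
      (Real.rpow_le_rpow_of_nonpos hxy₀ hxy.le (by linarith [d.cast_nonneg (α := ℝ)]))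
      (by positivity) (by linarith)
  calc ENNReal.ofReal ((1 / 4) ^ (d + 2) * δ ^ (1 - 2 * s)) *
        volume (ball (0 : EuclideanSpace ℝ (Fin d)) 1)
      ≤ ENNReal.ofReal (δ * (4 * δ) ^ (-((d : ℝ) + 2 * s))) * volume (ball c δ) := by
        rw [Measure.addHaar_ball volume c hx₀.le, finrank_euclideanSpace_fin, ← mul_assoc,
          ← ENNReal.ofReal_mul (by positivity)]
        gcongr ENNReal.ofReal ?_ * _
        exact quarter_pow_mul_rpow_le hs hx₀
    _ = ∫⁻ _ in ball c δ, ENNReal.ofReal (δ * (4 * δ) ^ (-((d : ℝ) + 2 * s))) :=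
        (setLIntegral_const _ _).symm
    _ ≤ ∫⁻ y in ball c δ, gagliardoKernel d s x y :=
        setLIntegral_mono' measurableSet_ball fun y hy => (hbound y hy).2
    _ ≤ ∫⁻ y in (ball 0 1)ᶜ, gagliardoKernel d s x y :=
        lintegral_mono_set fun y hy => by simpa using (hbound y hy).1.le

variable (d) in
def dyadicShell (n : ℕ) : Set (EuclideanSpace ℝ (Fin d)) :=
  (‖·‖) ⁻¹' Ioc (1 - (1 / 2) ^ (n + 2)) (1 - (1 / 2) ^ (n + 3))

variable (d) in
lemma measurableSet_dyadicShell (n : ℕ) : MeasurableSet (dyadicShell d n) :=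
  measurableSet_Ioc.preimage measurable_norm

variable (d) in
lemma pairwise_disjoint_dyadicShell : Pairwise (Disjoint on (dyadicShell d)) := by
  have hmono : Monotone fun n : ℕ => 1 - (1 / 2 : ℝ) ^ (n + 2) := fun m n hmn => by
    have := pow_le_pow_of_le_one (by norm_num : (0 : ℝ) ≤ 1 / 2) (by norm_num)
      (by omega : m + 2 ≤ n + 2)
    simp only; linarith
  exact hmono.pairwise_disjoint_on_Ioc_succ.mono fun m n h => h.preimage _

variable (d) in
lemma dyadicShell_subset_ball (n : ℕ) : dyadicShell d n ⊆ ball 0 1 := fun x hx => by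
  have : (0 : ℝ) < (1 / 2) ^ (n + 3) := by positivity
  simpa using hx.2.trans_lt (by linarith)

lemma ofReal_mul_volume_le_volume_dyadicShell (hd : d ≠ 0) (n : ℕ) :
    ENNReal.ofReal ((1 / 2) ^ (n + 3) * (1 / 2) ^ d) *
        volume (ball (0 : EuclideanSpace ℝ (Fin d)) 1) ≤ volume (dyadicShell d n) := by
  have hn2 : (1 / 2 : ℝ) ^ (n + 2) ≤ 1 / 2 :=
    pow_le_of_le_one (by norm_num) (by norm_num) (by omega)
  have hn3 : (1 / 2 : ℝ) ^ (n + 3) ≤ (1 / 2) ^ (n + 2) :=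
    pow_le_pow_of_le_one (by norm_num) (by norm_num) (by omega)
  have hpos : (0 : ℝ) < (1 / 2) ^ (n + 3) := by positivity
  rw [dyadicShell, addHaar_norm_preimage_Ioc volume (by linarith) (by linarith),
    finrank_euclideanSpace_fin]
  gcongr ENNReal.ofReal ?_ * _
  calc (1 / 2 : ℝ) ^ (n + 3) * (1 / 2) ^ d
      ≤ (1 / 2) ^ (n + 3) * (1 - (1 / 2) ^ (n + 2)) ^ d := by gcongr; linarith
    _ = ((1 - (1 / 2) ^ (n + 3)) - (1 - (1 / 2) ^ (n + 2))) * (1 - (1 / 2) ^ (n + 2)) ^ d := by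
        ring
    _ ≤ _ := sub_mul_pow_le_pow_sub_pow (by linarith) (by linarith) (by linarith) hd

lemma ofReal_mul_le_lintegral_dyadicShell (hd : d ≠ 0) {s : ℝ} (hs₀ : 1 / 2 ≤ s) (hs : s ≤ 1)
    (n : ℕ) :
    ENNReal.ofReal ((1 / 4) ^ (d + 3) * (1 / 2) ^ (d + 1)) *
        volume (ball (0 : EuclideanSpace ℝ (Fin d)) 1) ^ 2 *
        ENNReal.ofReal ((1 / 2) ^ (2 - 2 * s)) ^ n ≤
      ∫⁻ x in dyadicShell d n, ∫⁻ y in (ball 0 1)ᶜ, gagliardoKernel d s x y := by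
  set κ := volume (ball (0 : EuclideanSpace ℝ (Fin d)) 1)
  set A := ENNReal.ofReal ((1 / 4) ^ (d + 2) * ((1 / 2) ^ (n + 2)) ^ (1 - 2 * s)) * κ
  have hA : ∀ x ∈ dyadicShell d n,
      A ≤ ∫⁻ y in (ball 0 1)ᶜ, gagliardoKernel d s x y := by
    intro x ⟨hx₁, hx₂⟩
    have hn3 : (0 : ℝ) < (1 / 2) ^ (n + 3) := by positivity
    have hn2 : (1 / 2 : ℝ) ^ (n + 2) ≤ (1 / 2) ^ 2 :=
      pow_le_pow_of_le_one (by norm_num) (by norm_num) (by omega)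
    refine le_trans ?_ (ofReal_mul_volume_le_lintegral_gagliardoKernel (by linarith) hs
      (x := x) (by linarith) (by linarith))
    gcongr ENNReal.ofReal (_ * ?_) * _
    exact Real.rpow_le_rpow_of_nonpos (by linarith) (by linarith) (by linarith)
  calc _ = ENNReal.ofReal ((1 / 4) ^ (d + 3) * (1 / 2) ^ (d + 1) *
          ((1 / 2) ^ (2 - 2 * s)) ^ n) * κ ^ 2 := by
        rw [← ENNReal.ofReal_pow (by positivity),
          ENNReal.ofReal_mul (p := (1 / 4) ^ (d + 3) * (1 / 2) ^ (d + 1)) (by positivity)]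
        ring
    _ ≤ ENNReal.ofReal ((1 / 4) ^ (d + 2) * ((1 / 2) ^ (n + 2)) ^ (1 - 2 * s) *
          ((1 / 2) ^ (n + 3) * (1 / 2) ^ d)) * κ ^ 2 := by
        gcongr ENNReal.ofReal ?_ * _
        exact geometric_term_le hs₀
    _ = A * (ENNReal.ofReal ((1 / 2) ^ (n + 3) * (1 / 2) ^ d) * κ) := by
        rw [ENNReal.ofReal_mul (by positivity)]; ring
    _ ≤ A * volume (dyadicShell d n) := by
        gcongr; exact ofReal_mul_volume_le_volume_dyadicShell hd n
    _ = ∫⁻ _ in dyadicShell d n, A := (setLIntegral_const _ _).symm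
    _ ≤ _ := setLIntegral_mono' (measurableSet_dyadicShell d n) hA

end SqrtFn

lemma tendsto_inv_one_sub_ofReal_half_rpow :
    Tendsto (fun s : ℝ => (1 - ENNReal.ofReal ((1 / 2 : ℝ) ^ (2 - 2 * s)))⁻¹) (𝓝 1) (𝓝 ⊤) := by
  have hcont : Continuous fun s : ℝ => (1 - ENNReal.ofReal ((1 / 2 : ℝ) ^ (2 - 2 * s)))⁻¹ :=
    continuous_inv.comp <| (ENNReal.continuous_sub_left ENNReal.one_ne_top).comp <|
      ENNReal.continuous_ofReal.comp <|
        (Real.continuous_const_rpow (by norm_num)).comp (by fun_prop)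
  simpa using hcont.tendsto 1

theorem stmt15 (d : ℕ) (hd : 1 ≤ d) :
    Filter.Tendsto
      (fun s : ℝ => ∫⁻ x in Metric.ball (0 : EuclideanSpace ℝ (Fin d)) 1,
        ∫⁻ y in (Metric.ball (0 : EuclideanSpace ℝ (Fin d)) 1)ᶜ,
          ENNReal.ofReal (|sqrtFn d x - sqrtFn d y| ^ 2 * dist x y ^ (-((d : ℝ) + 2 * s))))
      (nhdsWithin 1 (Set.Iio 1)) (nhds ⊤) := by
  have : Nonempty (Fin d) := ⟨⟨0, hd⟩⟩
  set C := ENNReal.ofReal ((1 / 4) ^ (d + 3) * (1 / 2) ^ (d + 1)) *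
    volume (ball (0 : EuclideanSpace ℝ (Fin d)) 1) ^ 2
  have hC : C ≠ 0 := mul_ne_zero (ENNReal.ofReal_pos.mpr (by positivity)).ne'
    (pow_ne_zero 2 (measure_ball_pos volume 0 one_pos).ne')
  have hlim := ENNReal.Tendsto.const_mul (a := C) tendsto_inv_one_sub_ofReal_half_rpow
    (Or.inl ENNReal.top_ne_zero)
  rw [ENNReal.mul_top hC] at hlim
  refine tendsto_nhds_top_mono (hlim.mono_left nhdsWithin_le_nhds) ?_
  filter_upwards [Ioo_mem_nhdsLT (by norm_num : (1 / 2 : ℝ) < 1)] with s hs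
  exact mul_inv_one_sub_le_setLIntegral (measurableSet_dyadicShell d)
    (pairwise_disjoint_dyadicShell d) (dyadicShell_subset_ball d)
    (ofReal_mul_le_lintegral_dyadicShell (by omega) hs.1.le hs.2.le)
end
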